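/- Let n ≥ 4 be an integer, H = (n-1)/n and d ∈ ℝ. Choose ρ₀ > 0 such that M_{H,d} > 0 and P_{H,d} > 0 on [ρ₀, ∞), and define λ(ρ) := ∫_{ρ₀}^{ρ} Q_{H,d}(t) dt. Then there exist positive constants a and b such that lim_{ρ→∞} e^{−bρ}·λ(ρ) = a. -/

import Mathlib

/-!
With `H = (n - 1)/n` we have `nH = n - 1`, so the leading terms `(eᵗ/2)^(n-1)` of `sinh^(n-1) t`
and of `(n - 1) I_{n-1}(t)` cancel in `M`. The reduction formula
`(n - 1) I_{n-1} = sinh^(n-2) cosh - (n - 2) I_{n-3}` leaves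
`M = (n - 2) I_{n-3} - sinh^(n-2) e^(-t) - d`, which for `n ≥ 4` grows like `e^((n-3)t)`,
while `P` and the numerator of `Q` grow like `e^((n-1)t)`. Hence `Q(t) ~ a eᵗ` with
`a = 1/(2√((n-1)/(n-3)))`, and an integral version of Cesàro's theorem turns this
into `e^(-ρ) λ(ρ) → a`, so `b = 1`.
-/

open Filter Topology

/-- `Ifun m t = ∫₀ᵗ sinh^m(r) dr`. -/
noncomputable def Ifun (m : ℕ) (t : ℝ) : ℝ := ∫ r in (0:ℝ)..t, Real.sinh r ^ m

/-- `Mfun n H d t = sinh^{n-1}(t) − nH·I_{n-1}(t) − d`. -/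
noncomputable def Mfun (n : ℕ) (H d t : ℝ) : ℝ :=
  Real.sinh t ^ (n - 1) - n * H * Ifun (n - 1) t - d

/-- `Pfun n H d t = sinh^{n-1}(t) + nH·I_{n-1}(t) + d`. -/
noncomputable def Pfun (n : ℕ) (H d t : ℝ) : ℝ :=
  Real.sinh t ^ (n - 1) + n * H * Ifun (n - 1) t + d

/-- `Qfun n H d t = (nH·I_{n-1}(t) + d)/√(M·P)`. -/
noncomputable def Qfun (n : ℕ) (H d t : ℝ) : ℝ :=
  (n * H * Ifun (n - 1) t + d) / Real.sqrt (Mfun n H d t * Pfun n H d t)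

open Real MeasureTheory intervalIntegral Asymptotics

theorem tendsto_exp_neg_mul_atTop {b : ℝ} (hb : 0 < b) :
    Tendsto (fun t => exp (-(b * t))) atTop (𝓝 0) :=
  tendsto_exp_neg_atTop_nhds_zero.comp (tendsto_id.const_mul_atTop hb)

theorem isLittleO_integral_of_isLittleO {g φ : ℝ → ℝ} {t₀ : ℝ}
    (hg : ∀ ρ, t₀ ≤ ρ → IntervalIntegrable g volume t₀ ρ)
    (hφ : ∀ ρ, t₀ ≤ ρ → IntervalIntegrable φ volume t₀ ρ)
    (hφ_nonneg : ∀ t, t₀ ≤ t → 0 ≤ φ t)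
    (hφ_top : Tendsto (fun ρ => ∫ t in t₀..ρ, φ t) atTop atTop) (h : g =o[atTop] φ) :
    (fun ρ => ∫ t in t₀..ρ, g t) =o[atTop] fun ρ => ∫ t in t₀..ρ, φ t := by
  refine isLittleO_iff.2 fun c hc => ?_
  obtain ⟨T, hT⟩ := eventually_atTop.mp (isLittleO_iff.mp h (half_pos hc))
  set T' := max T t₀
  have hT't₀ : t₀ ≤ T' := le_max_right _ _
  set C := ∫ t in t₀..T', g t
  have hC : ∀ᶠ ρ in atTop, ‖C‖ ≤ c / 2 * ∫ t in t₀..ρ, φ t := by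
    filter_upwards [hφ_top.eventually_ge_atTop (‖C‖ / (c / 2))] with ρ hρ
    rwa [div_le_iff₀' (half_pos hc)] at hρ
  filter_upwards [hC, eventually_ge_atTop T'] with ρ hCρ hρ
  have hg' : IntervalIntegrable g volume T' ρ := (hg T' hT't₀).symm.trans (hg ρ (hT't₀.trans hρ))
  have hφ' : IntervalIntegrable φ volume T' ρ := (hφ T' hT't₀).symm.trans (hφ ρ (hT't₀.trans hρ))
  have htail : ‖∫ t in T'..ρ, g t‖ ≤ c / 2 * ∫ t in T'..ρ, φ t := by
    rw [← intervalIntegral.integral_const_mul]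
    refine norm_integral_le_of_norm_le hρ (ae_of_all _ fun t ht => ?_) (hφ'.const_mul _)
    have := hT t ((le_max_left _ _).trans ht.1.le)
    rwa [Real.norm_of_nonneg (hφ_nonneg t (hT't₀.trans ht.1.le))] at this
  have htail_le : ∫ t in T'..ρ, φ t ≤ ∫ t in t₀..ρ, φ t := by
    rw [← integral_add_adjacent_intervals (hφ T' hT't₀) hφ', le_add_iff_nonneg_left]
    exact integral_nonneg hT't₀ fun t ht => hφ_nonneg t ht.1
  rw [Real.norm_of_nonneg (integral_nonneg (hT't₀.trans hρ) fun t ht => hφ_nonneg t ht.1),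
    ← integral_add_adjacent_intervals (hg T' hT't₀) hg']
  calc ‖C + ∫ t in T'..ρ, g t‖ ≤ ‖C‖ + ‖∫ t in T'..ρ, g t‖ := norm_add_le _ _
    _ ≤ c * ∫ t in t₀..ρ, φ t := by
      linarith [mul_le_mul_of_nonneg_left htail_le (half_pos hc).le]

theorem tendsto_integral_div_integral_of_tendsto_div {f φ : ℝ → ℝ} {t₀ L : ℝ}
    (hf : ∀ ρ, t₀ ≤ ρ → IntervalIntegrable f volume t₀ ρ)
    (hφ : ∀ ρ, t₀ ≤ ρ → IntervalIntegrable φ volume t₀ ρ)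
    (hφ_pos : ∀ t, t₀ ≤ t → 0 < φ t)
    (hφ_top : Tendsto (fun ρ => ∫ t in t₀..ρ, φ t) atTop atTop)
    (h : Tendsto (fun t => f t / φ t) atTop (𝓝 L)) :
    Tendsto (fun ρ => (∫ t in t₀..ρ, f t) / ∫ t in t₀..ρ, φ t) atTop (𝓝 L) := by
  have hsub : (fun t => f t - L * φ t) =o[atTop] φ := by
    refine (isLittleO_iff_tendsto' ?_).mpr ?_
    · filter_upwards [eventually_ge_atTop t₀] with t ht h0
      exact absurd h0 (hφ_pos t ht).ne'
    · rw [← sub_self L]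
      refine (h.sub_const L).congr' ?_
      filter_upwards [eventually_ge_atTop t₀] with t ht
      field_simp [(hφ_pos t ht).ne']
  have hsub_int := isLittleO_integral_of_isLittleO
    (fun ρ hρ => (hf ρ hρ).sub ((hφ ρ hρ).const_mul L)) hφ
    (fun t ht => (hφ_pos t ht).le) hφ_top hsub
  have hφ_ne : ∀ᶠ ρ in atTop, (∫ t in t₀..ρ, φ t) ≠ 0 :=
    (hφ_top.eventually_gt_atTop 0).mono fun _ h => h.ne'
  rw [← zero_add L]
  refine (hsub_int.tendsto_div_nhds_zero.add_const L).congr' ?_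
  filter_upwards [eventually_ge_atTop t₀, hφ_ne] with ρ hρ hne
  rw [intervalIntegral.integral_sub (hf ρ hρ) ((hφ ρ hρ).const_mul L),
    intervalIntegral.integral_const_mul]
  field_simp
  ring

theorem tendsto_exp_neg_mul_integral {f : ℝ → ℝ} {b t₀ L : ℝ} (hb : 0 < b)
    (hf : ∀ ρ, t₀ ≤ ρ → IntervalIntegrable f volume t₀ ρ)
    (h : Tendsto (fun t => f t * exp (-(b * t))) atTop (𝓝 L)) :
    Tendsto (fun ρ => (∫ t in t₀..ρ, f t) * exp (-(b * ρ))) atTop (𝓝 (L / b)) := by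
  have hexp_int : ∀ ρ, ∫ t in t₀..ρ, exp (b * t) = (exp (b * ρ) - exp (b * t₀)) / b := by
    intro ρ
    rw [intervalIntegral.integral_comp_mul_left (fun t => exp t) hb.ne', integral_exp, smul_eq_mul]
    ring
  have hφ_top : Tendsto (fun ρ => ∫ t in t₀..ρ, exp (b * t)) atTop atTop := by
    simp_rw [hexp_int]
    exact (tendsto_atTop_add_const_right _ _
      (tendsto_exp_atTop.comp (tendsto_id.const_mul_atTop hb))).atTop_div_const hb
  have hratio := tendsto_integral_div_integral_of_tendsto_div (φ := fun t => exp (b * t)) hf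
    (fun ρ _ => (continuous_exp.comp (continuous_const.mul continuous_id)).intervalIntegrable _ _)
    (fun t _ => exp_pos _) hφ_top (h.congr fun t => by rw [exp_neg, div_eq_mul_inv])
  have hnorm : Tendsto (fun ρ => exp (-(b * ρ)) * ∫ t in t₀..ρ, exp (b * t)) atTop (𝓝 (1 / b)) := by
    have := (((tendsto_exp_neg_mul_atTop hb).const_mul (exp (b * t₀))).const_sub 1).div_const b
    rw [mul_zero, sub_zero] at this
    refine this.congr fun ρ => ?_
    simp only [hexp_int, mul_div_assoc', mul_sub, ← exp_add]
    ring_nf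
    rw [exp_zero, mul_one]
  rw [div_eq_mul_one_div]
  refine (hratio.mul hnorm).congr' ?_
  filter_upwards [hφ_top.eventually_gt_atTop 0] with ρ hρ
  field_simp

theorem tendsto_sinh_mul_exp_neg : Tendsto (fun t => sinh t * exp (-t)) atTop (𝓝 (1 / 2)) := by
  have := ((tendsto_exp_neg_atTop_nhds_zero.pow 2).const_sub 1).div_const 2
  rw [zero_pow two_ne_zero, sub_zero] at this
  refine this.congr fun t => ?_
  rw [sinh_eq, exp_neg]
  field_simp

theorem tendsto_sinh_pow_mul_exp_neg (m : ℕ) :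
    Tendsto (fun t => sinh t ^ m * exp (-(m * t))) atTop (𝓝 ((1 / 2) ^ m)) :=
  (tendsto_sinh_mul_exp_neg.pow m).congr fun t => by
    rw [mul_pow, ← exp_nat_mul, mul_neg]

theorem hasDerivAt_Ifun (m : ℕ) (t : ℝ) : HasDerivAt (Ifun m) (sinh t ^ m) t :=
  ((continuous_sinh.pow m).integral_hasStrictDerivAt 0 t).hasDerivAt

theorem continuous_Ifun (m : ℕ) : Continuous (Ifun m) :=
  continuous_iff_continuousAt.2 fun t => (hasDerivAt_Ifun m t).continuousAt

theorem tendsto_Ifun_mul_exp_neg {m : ℕ} (hm : 0 < m) :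
    Tendsto (fun t => Ifun m t * exp (-(m * t))) atTop (𝓝 ((1 / 2) ^ m / m)) :=
  tendsto_exp_neg_mul_integral (by exact_mod_cast hm)
    (fun _ _ => (continuous_sinh.pow m).intervalIntegrable _ _) (tendsto_sinh_pow_mul_exp_neg m)

theorem Ifun_add_two (k : ℕ) (t : ℝ) :
    ((k : ℝ) + 2) * Ifun (k + 2) t = sinh t ^ (k + 1) * cosh t - ((k : ℝ) + 1) * Ifun k t := by
  set G := fun t => sinh t ^ (k + 1) * cosh t - ((k : ℝ) + 1) * Ifun k t
    - ((k : ℝ) + 2) * Ifun (k + 2) t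
  have hG : ∀ t, HasDerivAt G 0 t := fun t => by
    have := ((((hasDerivAt_sinh t).fun_pow (k + 1)).fun_mul (hasDerivAt_cosh t)).fun_sub
      ((hasDerivAt_Ifun k t).const_mul ((k : ℝ) + 1))).fun_sub
      ((hasDerivAt_Ifun (k + 2) t).const_mul ((k : ℝ) + 2))
    refine this.congr_deriv ?_
    push_cast
    linear_combination ((k : ℝ) + 1) * sinh t ^ k * cosh_sq t
  have := is_const_of_deriv_eq_zero (fun t => (hG t).differentiableAt) (fun t => (hG t).deriv) t 0
  have hI0 : ∀ m, Ifun m 0 = 0 := fun m => integral_same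
  simp [G, hI0] at this
  linarith

section

variable {k : ℕ} {H d : ℝ}

-- Here `n = k + 3`, so that `nH = n - 1` reads `(k + 3) H = k + 2`.

theorem Mfun_add_three_eq (hH : ((k : ℝ) + 3) * H = k + 2) (t : ℝ) :
    Mfun (k + 3) H d t = ((k : ℝ) + 1) * Ifun k t - sinh t ^ (k + 1) * exp (-t) - d := by
  simp only [Mfun, show k + 3 - 1 = k + 2 from rfl, Nat.cast_add, Nat.cast_ofNat, hH]
  linear_combination (-1 : ℝ) * Ifun_add_two k t - sinh t ^ (k + 1) * cosh_sub_sinh t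

theorem tendsto_Mfun_mul_exp_neg (hH : ((k : ℝ) + 3) * H = k + 2) (hk : 0 < k) :
    Tendsto (fun t => Mfun (k + 3) H d t * exp (-(k * t))) atTop
      (𝓝 (((k : ℝ) + 2) / k * (1 / 2) ^ (k + 1))) := by
  have hsinh := tendsto_sinh_pow_mul_exp_neg (k + 1)
  push_cast at hsinh
  have := (((tendsto_Ifun_mul_exp_neg hk).const_mul ((k : ℝ) + 1)).sub hsinh).sub
    ((tendsto_exp_neg_mul_atTop (b := (k : ℝ)) (by exact_mod_cast hk)).const_mul d)
  convert this.congr fun t => ?_ using 2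
  · field_simp
    ring
  · rw [Mfun_add_three_eq hH, show -(((k : ℝ) + 1) * t) = -t + -(k * t) by ring, exp_add]
    ring

theorem tendsto_numerator_mul_exp_neg :
    Tendsto (fun t => (((k : ℝ) + 2) * Ifun (k + 2) t + d) * exp (-((k + 2) * t))) atTop
      (𝓝 ((1 / 2) ^ (k + 2))) := by
  have hI := tendsto_Ifun_mul_exp_neg (m := k + 2) (by omega)
  push_cast at hI
  have := (hI.const_mul ((k : ℝ) + 2)).add ((tendsto_exp_neg_mul_atTop (b := (k : ℝ) + 2)
    (by positivity)).const_mul d)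
  convert this.congr fun t => ?_ using 2
  · field_simp
    ring
  · ring

theorem tendsto_Pfun_mul_exp_neg (hH : ((k : ℝ) + 3) * H = k + 2) :
    Tendsto (fun t => Pfun (k + 3) H d t * exp (-((k + 2) * t))) atTop
      (𝓝 ((1 / 2) ^ (k + 1))) := by
  have hsinh := tendsto_sinh_pow_mul_exp_neg (k + 2)
  push_cast at hsinh
  convert (hsinh.add (tendsto_numerator_mul_exp_neg (d := d))).congr fun t => ?_ using 2
  · ring
  · simp only [Pfun, show k + 3 - 1 = k + 2 from rfl, Nat.cast_add, Nat.cast_ofNat, hH]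
    ring

theorem tendsto_Qfun_mul_exp_neg (hH : ((k : ℝ) + 3) * H = k + 2) (hk : 0 < k) :
    Tendsto (fun t => Qfun (k + 3) H d t * exp (-t)) atTop (𝓝 (1 / (2 * √((k + 2) / k)))) := by
  have hM := tendsto_Mfun_mul_exp_neg (d := d) hH hk
  have hlim_pos : 0 < ((k : ℝ) + 2) / k * (1 / 2) ^ (k + 1) * (1 / 2) ^ (k + 1) := by
    have : (0 : ℝ) < k := by exact_mod_cast hk
    positivity
  have := (tendsto_numerator_mul_exp_neg (k := k) (d := d)).div
    ((hM.mul (tendsto_Pfun_mul_exp_neg (d := d) hH)).sqrt)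
    (sqrt_pos.2 hlim_pos).ne'
  convert this.congr fun t => ?_ using 2
  · rw [mul_assoc, ← sq, sqrt_mul' _ (sq_nonneg _), sqrt_sq (by positivity)]
    field_simp
    ring
  · have hsq : exp (-(k * t)) * exp (-((k + 2) * t)) = exp (-((k + 1) * t)) ^ 2 := by
      rw [sq, ← exp_add, ← exp_add]
      ring_nf
    have hP : exp (-((k + 2) * t)) = exp (-((k + 1) * t)) * exp (-t) := by
      rw [← exp_add]
      ring_nf
    have hMP : Mfun (k + 3) H d t * exp (-(k * t)) * (Pfun (k + 3) H d t * exp (-((k + 2) * t)))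
        = Mfun (k + 3) H d t * Pfun (k + 3) H d t * exp (-((k + 1) * t)) ^ 2 := by
      rw [← hsq]
      ring
    simp only [Pi.div_apply, Qfun, show k + 3 - 1 = k + 2 from rfl, Nat.cast_add, Nat.cast_ofNat, hH]
    rw [hMP, sqrt_mul' _ (sq_nonneg _), sqrt_sq (exp_pos _).le, hP, ← mul_assoc, mul_right_comm,
      mul_div_mul_right _ _ (exp_pos _).ne', div_mul_eq_mul_div]

end

theorem continuousOn_Qfun (n : ℕ) (H d : ℝ) {s : Set ℝ}
    (hs : ∀ t ∈ s, 0 < Mfun n H d t * Pfun n H d t) : ContinuousOn (Qfun n H d) s := by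
  have := continuous_Ifun (n - 1)
  refine ContinuousOn.div (by fun_prop) ?_ fun t ht => (sqrt_pos.2 (hs t ht)).ne'
  unfold Mfun Pfun
  fun_prop

theorem stmt11_general (n : ℕ) (hn : 4 ≤ n) (H d : ℝ) (hH : H = ((n : ℝ) - 1) / n)
    (ρ₀ : ℝ)
    (hMP : ∀ t, ρ₀ ≤ t → 0 < Mfun n H d t ∧ 0 < Pfun n H d t) :
    ∃ a b : ℝ, 0 < a ∧ 0 < b ∧
      Tendsto (fun ρ : ℝ => Real.exp (-b * ρ) * ∫ t in ρ₀..ρ, Qfun n H d t) atTop (𝓝 a) := by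
  obtain ⟨k, rfl⟩ : ∃ k, n = k + 3 := ⟨n - 3, by omega⟩
  have hk : 0 < k := by omega
  have hH' : ((k : ℝ) + 3) * H = k + 2 := by
    rw [hH]
    push_cast
    field_simp
    ring
  have hQ_int : ∀ ρ, ρ₀ ≤ ρ → IntervalIntegrable (Qfun (k + 3) H d) volume ρ₀ ρ := fun ρ hρ =>
    (continuousOn_Qfun _ H d fun t ht =>
      mul_pos (hMP t ht.1).1 (hMP t ht.1).2).intervalIntegrable_of_Icc hρ
  have hlim := tendsto_exp_neg_mul_integral one_pos hQ_int
    (by simpa only [one_mul] using tendsto_Qfun_mul_exp_neg (d := d) hH' hk)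
  exact ⟨_, 1, by positivity, one_pos, hlim.congr fun ρ => by rw [mul_comm, neg_mul]⟩

/-- Let `n ≥ 4`, `H = (n-1)/n` and `d ∈ ℝ`. Let `ρ₀ > 0` be such that `M_{H,d} > 0` and
`P_{H,d} > 0` on `[ρ₀, ∞)`, and set `λ(ρ) := ∫_{ρ₀}^{ρ} Q_{H,d}(t) dt`. Then there exist
positive constants `a`, `b` with `lim_{ρ→∞} e^{−bρ}·λ(ρ) = a`. -/
theorem stmt11 (n : ℕ) (hn : 4 ≤ n) (H d : ℝ) (hH : H = ((n : ℝ) - 1) / n)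
    (ρ₀ : ℝ) (hρ₀ : 0 < ρ₀)
    (hMP : ∀ t, ρ₀ ≤ t → 0 < Mfun n H d t ∧ 0 < Pfun n H d t) :
    ∃ a b : ℝ, 0 < a ∧ 0 < b ∧
      Tendsto (fun ρ : ℝ => Real.exp (-b * ρ) * ∫ t in ρ₀..ρ, Qfun n H d t) atTop (𝓝 a) :=
  stmt11_general n hn H d hH ρ₀ hMP
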